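/- arXiv:1202.3385 — 5 statements merged into one kernel-verified Lean document; each statement's English description precedes it below -/
import Mathlib

section
/- Let P be a finite set of points in general position in ℝ² and let f_i, f_{i+1}, …, f_j (i < j) be nonzero affine functionals on ℝ² (oriented lines L_t = {p : f_t(p) = 0}, with L_t⁻ = {p ∈ P : f_t(p) ≤ 0} and L_t⁺ = {p ∈ P : f_t(p) ≥ 0}) such that each line L_t contains exactly one point v_t of P, and for each t with i ≤ t < j either (L_{t+1}⁺ = L_t⁺ and L_{t+1}⁻ = (L_t⁻ \ {v_t}) ∪ {v_{t+1}}) or (L_{t+1}⁺ = (L_t⁺ \ {v_t}) ∪ {v_{t+1}} and L_{t+1}⁻ = L_t⁻). If x, y, z are three distinct points of P lying in L_i⁺ ∩ L_j⁻, then there exist integers k and l with i ≤ k < l < j such that v_k ∈ {x, y, z}, all of x, y, z lie in L_k⁺ ∩ L_j⁻, and the line L_l crosses the triangle xyz, i.e., L_l meets the interior of the convex hull of {x, y, z} (equivalently, at least one of x, y, z satisfies f_l > 0 and at least one satisfies f_l < 0). -/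
open Real

/-- Points of the Euclidean plane. -/
abbrev Pt : Type := ℝ × ℝ

/-- A point set is in general position if no three distinct points of it are collinear. -/
def GenPos (Q : Set Pt) : Prop :=
  ∀ u ∈ Q, ∀ v ∈ Q, ∀ w ∈ Q,
    u ≠ v → u ≠ w → v ≠ w → ¬ Collinear ℝ ({u, v, w} : Set Pt)

/-- All edges of the graph `G` join points of `Q`:  `G` is a geometric graph
with vertex set (contained in) `Q`. -/
def EdgesIn (G : SimpleGraph Pt) (Q : Set Pt) : Prop :=
  ∀ ⦃a b : Pt⦄, G.Adj a b → a ∈ Q ∧ b ∈ Q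

/-- The straight-line drawing of `T` is plane (non-self intersecting): the closed
segments of two distinct edges intersect in at most a common endpoint. -/
def IsPlane (T : SimpleGraph Pt) : Prop :=
  ∀ ⦃a b c d : Pt⦄, T.Adj a b → T.Adj c d → ({a, b} : Set Pt) ≠ ({c, d} : Set Pt) →
    segment ℝ a b ∩ segment ℝ c d ⊆ ({a, b} : Set Pt) ∩ ({c, d} : Set Pt)

/-- The induced geometric subgraph of `G` on the point set `Q`, viewed again as a
graph on the whole plane. -/
def induceOn (G : SimpleGraph Pt) (Q : Set Pt) : SimpleGraph Pt where
  Adj a b := G.Adj a b ∧ a ∈ Q ∧ b ∈ Q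
  symm := ⟨fun a b ⟨h, ha, hb⟩ => ⟨h.symm, hb, ha⟩⟩
  loopless := ⟨fun a ⟨h, _, _⟩ => G.loopless.irrefl a h⟩

/-- `G` (a geometric graph with vertex set `Q`) has a plane spanning tree: a subgraph
`T` of `G`, with all edges inside `Q`, whose straight-line drawing is plane and whose
induced graph on `Q` is a tree (in particular it is connected, i.e. spanning). -/
def HasPlaneSpanningTree (Q : Set Pt) (G : SimpleGraph Pt) : Prop :=
  ∃ T : SimpleGraph Pt, T ≤ G ∧ EdgesIn T Q ∧ IsPlane T ∧ (T.induce Q).IsTree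

/-- `u, v, w` are three distinct points of `Q` forming an empty triangle of the point
set `Q`: no point of `Q` lies in the interior of the convex hull of `{u, v, w}`. -/
def EmptyTri (Q : Set Pt) (u v w : Pt) : Prop :=
  u ∈ Q ∧ v ∈ Q ∧ w ∈ Q ∧ u ≠ v ∧ u ≠ w ∧ v ≠ w ∧
    ∀ p ∈ Q, p ∉ interior (convexHull ℝ ({u, v, w} : Set Pt))

/-- `u, v, w` is a disconnected empty triangle of the geometric graph `G` on point set
`Q` : it is an empty triangle of `Q` and the subgraph of `G` induced by `{u, v, w}` is
not connected. -/
def DiscTri (Q : Set Pt) (G : SimpleGraph Pt) (u v w : Pt) : Prop :=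
  EmptyTri Q u v w ∧ ¬ (G.induce ({u, v, w} : Set Pt)).Connected

/-- `sG Q G` is the number of disconnected empty triangles of the geometric graph `G`
with vertex set `Q` (triangles counted as unordered triples of points). -/
noncomputable def sG (Q : Set Pt) (G : SimpleGraph Pt) : ℕ :=
  {t : Set Pt | ∃ u v w, t = {u, v, w} ∧ DiscTri Q G u v w}.ncard

/-- rotating line lemma. Given one run of the rotating-line
procedure between steps `i < j` (each line `{f t = 0}` contains exactly one point
`v t` of `P`, and at each step one closed side keeps while on the other the pivot
`v t` is replaced by `v (t+1)`), if three distinct points `x, y, z` of `P` lie in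
`L i ⁺ ∩ L j ⁻`, then there are `k, l` with `i ≤ k < l < j` such that `v k ∈ {x,y,z}`,
all of `x, y, z` lie in `L k ⁺ ∩ L j ⁻`, and the line `L l` crosses the triangle
`x y z` (some vertex has `f l > 0` and some vertex has `f l < 0`). -/
theorem rotating_line_crosses_triangle
    (P : Finset Pt) (hgp : GenPos ↑P)
    (i j : ℕ) (hij : i < j)
    (f : ℕ → (Pt →ᵃ[ℝ] ℝ)) (v : ℕ → Pt)
    (hf : ∀ t, i ≤ t → t ≤ j → (f t).linear ≠ 0)
    (hv : ∀ t, i ≤ t → t ≤ j → {p ∈ (↑P : Set Pt) | f t p = 0} = {v t})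
    (hstep : ∀ t, i ≤ t → t < j →
      ({p ∈ (↑P : Set Pt) | 0 ≤ f (t + 1) p} = {p ∈ (↑P : Set Pt) | 0 ≤ f t p} ∧
        {p ∈ (↑P : Set Pt) | f (t + 1) p ≤ 0} =
          ({p ∈ (↑P : Set Pt) | f t p ≤ 0} \ {v t}) ∪ {v (t + 1)}) ∨
      ({p ∈ (↑P : Set Pt) | 0 ≤ f (t + 1) p} =
          ({p ∈ (↑P : Set Pt) | 0 ≤ f t p} \ {v t}) ∪ {v (t + 1)} ∧
        {p ∈ (↑P : Set Pt) | f (t + 1) p ≤ 0} = {p ∈ (↑P : Set Pt) | f t p ≤ 0}))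
    (x y z : Pt) (hx : x ∈ P) (hy : y ∈ P) (hz : z ∈ P)
    (hxy : x ≠ y) (hxz : x ≠ z) (hyz : y ≠ z)
    (hxi : 0 ≤ f i x) (hyi : 0 ≤ f i y) (hzi : 0 ≤ f i z)
    (hxj : f j x ≤ 0) (hyj : f j y ≤ 0) (hzj : f j z ≤ 0) :
    ∃ k l, i ≤ k ∧ k < l ∧ l < j ∧ v k ∈ ({x, y, z} : Set Pt) ∧
      (0 ≤ f k x ∧ 0 ≤ f k y ∧ 0 ≤ f k z) ∧
      (f j x ≤ 0 ∧ f j y ≤ 0 ∧ f j z ≤ 0) ∧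
      (∃ a ∈ ({x, y, z} : Set Pt), 0 < f l a) ∧
      (∃ b ∈ ({x, y, z} : Set Pt), f l b < 0) := by
    classical
  set Pred : ℕ → Prop := fun t => i ≤ t ∧ 0 ≤ f t x ∧ 0 ≤ f t y ∧ 0 ≤ f t z with hPred
  have hpi : Pred i := ⟨le_rfl, hxi, hyi, hzi⟩
  set k := Nat.findGreatest Pred j with hkdef
  have hki : i ≤ k := Nat.le_findGreatest hij.le hpi
  have hkspec : Pred k := Nat.findGreatest_spec hij.le hpi
  have hkj : k ≤ j := Nat.findGreatest_le j
  -- points of P with f t = 0 are exactly v t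
  have hzerov : ∀ t, i ≤ t → t ≤ j → ∀ w, w ∈ P → f t w = 0 → w = v t := by
    intro t hit htj w hw h0
    have hmem : w ∈ {p ∈ (↑P : Set Pt) | f t p = 0} := ⟨hw, h0⟩
    rw [hv t hit htj] at hmem
    exact hmem
  -- k ≠ j
  have hknej : k ≠ j := by
    intro hkj'
    obtain ⟨-, hax, hay, -⟩ := hkspec
    rw [hkj'] at hax hay
    have hx0 : f j x = 0 := le_antisymm hxj hax
    have hy0 : f j y = 0 := le_antisymm hyj hay
    have := (hzerov j hij.le le_rfl x hx hx0).trans (hzerov j hij.le le_rfl y hy hy0).symm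
    exact hxy this
  have hklt : k < j := lt_of_le_of_ne hkj hknej
  -- a point that goes from nonnegative to negative must be the pivot
  have hpivot : ∀ w, w ∈ P → 0 ≤ f k w → f (k + 1) w < 0 → w = v k := by
    intro w hw hw0 hw1
    rcases hstep k hki hklt with ⟨h1, -⟩ | ⟨h1, -⟩
    · have hmem : w ∈ {p ∈ (↑P : Set Pt) | 0 ≤ f (k + 1) p} := by
        rw [h1]; exact ⟨hw, hw0⟩
      exact absurd hmem.2 (not_le.mpr hw1)
    · by_contra hne
      have hmem : w ∈ ({p ∈ (↑P : Set Pt) | 0 ≤ f k p} \ {v k}) ∪ {v (k + 1)} :=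
        Set.mem_union_left _ ⟨⟨hw, hw0⟩, fun hs => hne (Set.mem_singleton_iff.mp hs)⟩
      rw [← h1] at hmem
      exact absurd hmem.2 (not_le.mpr hw1)
  -- at step k+1 not all three are nonnegative
  have hnot : ¬ Pred (k + 1) := Nat.findGreatest_is_greatest (Nat.lt_succ_self k) hklt
  have hneg : f (k + 1) x < 0 ∨ f (k + 1) y < 0 ∨ f (k + 1) z < 0 := by
    by_contra h
    push_neg at h
    exact hnot ⟨hki.trans (Nat.le_succ k), h.1, h.2.1, h.2.2⟩
  obtain ⟨-, hkx, hky, hkz⟩ := hkspec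
  -- generic treatment of the three cases
  have key : ∀ a b c : Pt, a ∈ P → b ∈ P → c ∈ P → a ≠ b → a ≠ c → b ≠ c →
      0 ≤ f k a → 0 ≤ f k b → 0 ≤ f k c → f j b ≤ 0 → f j c ≤ 0 →
      f (k + 1) a < 0 →
      v k = a ∧ k + 1 < j ∧ (0 < f (k + 1) b ∨ 0 < f (k + 1) c) := by
    intro a b c ha hb hc hab hac hbc hka hkb hkc hjb hjc hnega
    have hva : a = v k := hpivot a ha hka hnega
    have hb1 : 0 ≤ f (k + 1) b := by
      by_contra h
      push_neg at h
      exact hab (hva.trans (hpivot b hb hkb h).symm)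
    have hc1 : 0 ≤ f (k + 1) c := by
      by_contra h
      push_neg at h
      exact hac (hva.trans (hpivot c hc hkc h).symm)
    have hk1j : k + 1 ≤ j := hklt
    have hk1i : i ≤ k + 1 := hki.trans (Nat.le_succ k)
    have hlt : k + 1 < j := by
      rcases lt_or_eq_of_le hk1j with h | h
      · exact h
      · exfalso
        rw [h] at hb1 hc1
        have hb0 : f j b = 0 := le_antisymm hjb hb1
        have hc0 : f j c = 0 := le_antisymm hjc hc1
        exact hbc ((hzerov j hij.le le_rfl b hb hb0).trans
          (hzerov j hij.le le_rfl c hc hc0).symm)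
    refine ⟨hva.symm, hlt, ?_⟩
    by_contra h
    push_neg at h
    have hb0 : f (k + 1) b = 0 := le_antisymm h.1 hb1
    have hc0 : f (k + 1) c = 0 := le_antisymm h.2 hc1
    exact hbc ((hzerov (k + 1) hk1i hlt.le b hb hb0).trans
      (hzerov (k + 1) hk1i hlt.le c hc hc0).symm)
  rcases hneg with h | h | h
  · obtain ⟨hvk, hlt, hpos⟩ := key x y z hx hy hz hxy hxz hyz hkx hky hkz hyj hzj h
    refine ⟨k, k + 1, hki, Nat.lt_succ_self k, hlt, by simp [hvk], ⟨hkx, hky, hkz⟩,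
      ⟨hxj, hyj, hzj⟩, ?_, ⟨x, by simp, h⟩⟩
    rcases hpos with hp | hp
    · exact ⟨y, by simp, hp⟩
    · exact ⟨z, by simp, hp⟩
  · obtain ⟨hvk, hlt, hpos⟩ := key y x z hy hx hz hxy.symm hyz hxz hky hkx hkz hxj hzj h
    refine ⟨k, k + 1, hki, Nat.lt_succ_self k, hlt, by simp [hvk], ⟨hkx, hky, hkz⟩,
      ⟨hxj, hyj, hzj⟩, ?_, ⟨y, by simp, h⟩⟩
    rcases hpos with hp | hp
    · exact ⟨x, by simp, hp⟩
    · exact ⟨z, by simp, hp⟩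
  · obtain ⟨hvk, hlt, hpos⟩ := key z x y hz hx hy hxz.symm hyz.symm hxy hkz hkx hky hxj hyj h
    refine ⟨k, k + 1, hki, Nat.lt_succ_self k, hlt, by simp [hvk], ⟨hkx, hky, hkz⟩,
      ⟨hxj, hyj, hzj⟩, ?_, ⟨z, by simp, h⟩⟩
    rcases hpos with hp | hp
    · exact ⟨x, by simp, hp⟩
    · exact ⟨y, by simp, hp⟩
end

section
/- For every n ≥ 3 there exist a set P of n points in general position in the plane and a geometric graph G with vertex set P such that s(G) = n − 2 and G contains no plane spanning tree. Consequently, the bound n − 3 in the main theorem cannot be improved. -/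
open Real

/-! ### Auxiliary geometric lemmas -/

noncomputable def lmap (A B : ℝ) : Pt →L[ℝ] ℝ :=
  A • ContinuousLinearMap.fst ℝ ℝ ℝ + B • ContinuousLinearMap.snd ℝ ℝ ℝ

lemma lmap_apply (A B : ℝ) (q : Pt) : lmap A B q = A * q.1 + B * q.2 := by
  simp [lmap, smul_eq_mul]

lemma lmap_surj {A B : ℝ} (h : ¬(A = 0 ∧ B = 0)) : Function.Surjective (lmap A B) := by
  intro r
  rcases not_and_or.mp h with hA | hB
  · exact ⟨(r / A, 0), by rw [lmap_apply]; field_simp; ring⟩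
  · exact ⟨(0, r / B), by rw [lmap_apply]; field_simp; ring⟩

lemma not_mem_interior_tri (u v w p : Pt) (A B C : ℝ) (hAB : ¬(A = 0 ∧ B = 0))
    (hu : A * u.1 + B * u.2 + C ≤ 0) (hv : A * v.1 + B * v.2 + C ≤ 0)
    (hw : A * w.1 + B * w.2 + C ≤ 0) (hp : 0 ≤ A * p.1 + B * p.2 + C) :
    p ∉ interior (convexHull ℝ ({u, v, w} : Set Pt)) := by
  intro hmem
  have hsub : convexHull ℝ ({u, v, w} : Set Pt) ⊆ (lmap A B) ⁻¹' Set.Iic (-C) := by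
    apply convexHull_min
    · rintro q (rfl | rfl | rfl) <;>
        simp only [Set.mem_preimage, Set.mem_Iic, lmap_apply] <;> linarith
    · have : Convex ℝ {q : Pt | lmap A B q ≤ -C} :=
        convex_halfSpace_le (lmap A B).toLinearMap.isLinear (-C)
      exact this
  have h2 := interior_mono hsub hmem
  rw [(lmap A B).interior_preimage (lmap_surj hAB), interior_Iic] at h2
  rw [Set.mem_preimage, Set.mem_Iio, lmap_apply] at h2
  linarith

lemma range_three (u v w : Pt) : Set.range ![u, v, w] = {u, v, w} := by
  ext q
  constructor
  · rintro ⟨i, rfl⟩; fin_cases i <;> simp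
  · rintro (rfl | rfl | rfl)
    exacts [⟨0, rfl⟩, ⟨1, rfl⟩, ⟨2, rfl⟩]

lemma cross_not_collinear (p q r : Pt)
    (h : (q.1 - p.1) * (r.2 - p.2) - (q.2 - p.2) * (r.1 - p.1) ≠ 0) :
    ¬ Collinear ℝ ({p, q, r} : Set Pt) := by
  intro hcol
  rw [collinear_iff_of_mem (Set.mem_insert p {q, r})] at hcol
  obtain ⟨d, hd⟩ := hcol
  obtain ⟨tq, hq⟩ := hd q (by simp)
  obtain ⟨tr, hr⟩ := hd r (by simp)
  apply h
  have hq1 : q.1 = tq * d.1 + p.1 := by rw [hq]; simp [Prod.smul_def]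
  have hq2 : q.2 = tq * d.2 + p.2 := by rw [hq]; simp [Prod.smul_def]
  have hr1 : r.1 = tr * d.1 + p.1 := by rw [hr]; simp [Prod.smul_def]
  have hr2 : r.2 = tr * d.2 + p.2 := by rw [hr]; simp [Prod.smul_def]
  rw [hq1, hq2, hr1, hr2]; ring

lemma mem_interior_tri (u v w p : Pt) (hnc : ¬ Collinear ℝ ({u, v, w} : Set Pt))
    (a b c : ℝ) (ha : 0 < a) (hb : 0 < b) (hc : 0 < c) (habc : a + b + c = 1)
    (hp : p = a • u + b • v + c • w) :
    p ∈ interior (convexHull ℝ ({u, v, w} : Set Pt)) := by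
  have hind : AffineIndependent ℝ ![u, v, w] := by
    rw [affineIndependent_iff_not_collinear]
    convert hnc using 2
    exact range_three u v w
  have htot : affineSpan ℝ (Set.range ![u, v, w]) = ⊤ := by
    rw [hind.affineSpan_eq_top_iff_card_eq_finrank_add_one]
    simp
  let B : AffineBasis (Fin 3) ℝ Pt := ⟨![u, v, w], hind, htot⟩
  have hB : interior (convexHull ℝ (Set.range (B : Fin 3 → Pt))) =
      {x | ∀ i, 0 < B.coord i x} := B.interior_convexHull
  have hrange : Set.range (B : Fin 3 → Pt) = ({u, v, w} : Set Pt) := range_three u v w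
  rw [hrange] at hB
  rw [hB]
  have hw1 : (Finset.univ : Finset (Fin 3)).sum ![a, b, c] = 1 := by
    simp [Fin.sum_univ_three]; linarith
  have hcomb : p = Finset.univ.affineCombination ℝ (B : Fin 3 → Pt) ![a, b, c] := by
    rw [Finset.affineCombination_eq_linear_combination _ _ _ hw1]
    rw [hp]
    simp only [Fin.sum_univ_three]
    rfl
  intro i
  rw [hcomb, B.coord_apply_combination_of_mem (Finset.mem_univ i) hw1]
  fin_cases i <;> simpa

lemma strict_inside (u v w p : Pt)
    (h1 : 0 < (v.1 - p.1) * (w.2 - p.2) - (v.2 - p.2) * (w.1 - p.1))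
    (h2 : 0 < (w.1 - p.1) * (u.2 - p.2) - (w.2 - p.2) * (u.1 - p.1))
    (h3 : 0 < (u.1 - p.1) * (v.2 - p.2) - (u.2 - p.2) * (v.1 - p.1)) :
    p ∈ interior (convexHull ℝ ({u, v, w} : Set Pt)) := by
  set cu := (v.1 - p.1) * (w.2 - p.2) - (v.2 - p.2) * (w.1 - p.1) with hcu
  set cv := (w.1 - p.1) * (u.2 - p.2) - (w.2 - p.2) * (u.1 - p.1) with hcv
  set cw := (u.1 - p.1) * (v.2 - p.2) - (u.2 - p.2) * (v.1 - p.1) with hcw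
  have hD : (v.1 - u.1) * (w.2 - u.2) - (v.2 - u.2) * (w.1 - u.1) = cu + cv + cw := by
    rw [hcu, hcv, hcw]; ring
  have hDpos : 0 < cu + cv + cw := by positivity
  have hnc : ¬ Collinear ℝ ({u, v, w} : Set Pt) :=
    cross_not_collinear u v w (by rw [hD]; exact ne_of_gt hDpos)
  set D := cu + cv + cw with hDdef
  apply mem_interior_tri u v w p hnc (cu / D) (cv / D) (cw / D)
    (div_pos h1 hDpos) (div_pos h2 hDpos) (div_pos h3 hDpos)
    (by field_simp; exact hDdef.symm)
  have hne : D ≠ 0 := ne_of_gt hDpos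
  have e1 : p.1 = (cu / D) * u.1 + (cv / D) * v.1 + (cw / D) * w.1 := by
    field_simp
    rw [hDdef, hcu, hcv, hcw]; ring
  have e2 : p.2 = (cu / D) * u.2 + (cv / D) * v.2 + (cw / D) * w.2 := by
    field_simp
    rw [hDdef, hcu, hcv, hcw]; ring
  have : p = (p.1, p.2) := rfl
  rw [this, e1, e2]
  simp [Prod.smul_def, Prod.ext_iff]

lemma triple_comm12 (p q r : Pt) : ({p, q, r} : Set Pt) = {q, p, r} :=
  Set.insert_comm p q {r}

lemma triple_rot (p q r : Pt) : ({p, q, r} : Set Pt) = {r, p, q} := by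
  ext z; simp only [Set.mem_insert_iff, Set.mem_singleton_iff]; tauto

lemma triple_comm23 (p q r : Pt) : ({p, q, r} : Set Pt) = {p, r, q} := by
  ext z; simp only [Set.mem_insert_iff, Set.mem_singleton_iff]; tauto

/-! ### The construction -/

noncomputable def xpt (n : ℕ) : Pt := (0, -(n : ℝ) ^ 4)

noncomputable def vpt (k : ℕ) : Pt := ((k : ℝ), (k : ℝ) ^ 2)

noncomputable def Fs (n : ℕ) : Finset Pt := (Finset.Icc 1 (n - 1)).image vpt

noncomputable def Ps (n : ℕ) : Finset Pt := insert (xpt n) (Fs n)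

noncomputable def Gg (n : ℕ) : SimpleGraph Pt :=
  SimpleGraph.fromRel (fun a b => a ∈ Fs n ∧ b ∈ Fs n)

lemma vpt_inj : Function.Injective vpt := by
  intro a b h
  simp only [vpt, Prod.mk.injEq] at h
  exact_mod_cast h.1

lemma xpt_ne_vpt (n k : ℕ) (hk : 1 ≤ k) : xpt n ≠ vpt k := by
  intro h
  have := congrArg Prod.fst h
  simp only [xpt, vpt] at this
  have : (0 : ℝ) = (k : ℝ) := this
  have : (k : ℝ) = 0 := this.symm
  have : k = 0 := by exact_mod_cast this
  omega

lemma mem_Fs {n : ℕ} {q : Pt} :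
    q ∈ Fs n ↔ ∃ k, (1 ≤ k ∧ k ≤ n - 1) ∧ q = vpt k := by
  simp only [Fs, Finset.mem_image, Finset.mem_Icc]
  constructor
  · rintro ⟨k, hk, rfl⟩; exact ⟨k, hk, rfl⟩
  · rintro ⟨k, hk, rfl⟩; exact ⟨k, hk, rfl⟩

lemma xpt_not_mem_Fs (n : ℕ) : xpt n ∉ Fs n := by
  rw [mem_Fs]
  rintro ⟨k, ⟨hk1, -⟩, h⟩
  exact xpt_ne_vpt n k hk1 h

lemma cast_bounds {n k : ℕ} (hn : 3 ≤ n) (h1 : 1 ≤ k) (h2 : k ≤ n - 1) :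
    1 ≤ (k : ℝ) ∧ (k : ℝ) ≤ (n : ℝ) - 1 := by
  constructor
  · exact_mod_cast h1
  · have : k + 1 ≤ n := by omega
    have : (k : ℝ) + 1 ≤ (n : ℝ) := by exact_mod_cast this
    linarith

lemma keyineq {n : ℕ} (s t : ℝ) (hn : 3 ≤ n) (hs1 : 1 ≤ s) (hsn : s ≤ (n : ℝ) - 1)
    (ht1 : 1 ≤ t) (htn : t ≤ (n : ℝ) - 1) : s * t + t < (n : ℝ) ^ 4 := by
  have hn3 : (3 : ℝ) ≤ (n : ℝ) := by exact_mod_cast hn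
  have h1 : s * t ≤ ((n : ℝ) - 1) * ((n : ℝ) - 1) :=
    mul_le_mul hsn htn (by linarith) (by linarith)
  nlinarith [sq_nonneg ((n : ℝ) - 1), sq_nonneg (n : ℝ), sq_nonneg ((n:ℝ)^2 - (n:ℝ))]

/-- No vertex is adjacent to the apex `xpt n`. -/
lemma noadj (n : ℕ) (q : Pt) : ¬ (Gg n).Adj (xpt n) q := by
  intro h
  rw [Gg, SimpleGraph.fromRel_adj] at h
  rcases h with ⟨-, ⟨h1, -⟩ | ⟨-, h2⟩⟩
  · exact xpt_not_mem_Fs n h1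
  · exact xpt_not_mem_Fs n h2

lemma no_conn (n : ℕ) (T : SimpleGraph Pt) (hT : T ≤ Gg n) (s : Set Pt)
    (hx : xpt n ∈ s) (y : Pt) (hy : y ∈ s) (hyx : y ≠ xpt n) :
    ¬ (T.induce s).Connected := by
  intro hconn
  have key : ∀ (a b : ↑s) (w : (T.induce s).Walk a b),
      (a : Pt) = xpt n → (b : Pt) ≠ xpt n → False := by
    intro a b w
    induction w with
    | nil => intro h1 h2; exact h2 h1
    | @cons u v' w' hadj _ _ =>
      intro h1 _
      have hT2 : T.Adj (u : Pt) (v' : Pt) := by simpa using hadj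
      rw [h1] at hT2
      exact noadj n _ (hT hT2)
  obtain ⟨wk⟩ := hconn.preconnected ⟨xpt n, hx⟩ ⟨y, hy⟩
  exact key _ _ wk rfl hyx

lemma conn_sub (n : ℕ) (s : Set Pt) (hne : s.Nonempty) (hs : s ⊆ ↑(Fs n)) :
    ((Gg n).induce s).Connected := by
  rw [SimpleGraph.connected_iff]
  refine ⟨?_, ⟨⟨hne.choose, hne.choose_spec⟩⟩⟩
  rintro ⟨p, hp⟩ ⟨q, hq⟩
  by_cases hpq : p = q
  · subst hpq; rfl
  · apply SimpleGraph.Adj.reachable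
    have : (Gg n).Adj p q := by
      rw [Gg, SimpleGraph.fromRel_adj]
      exact ⟨hpq, Or.inl ⟨hs hp, hs hq⟩⟩
    simpa using this

lemma nc_parab (a b c : ℝ) (hab : a ≠ b) (hac : a ≠ c) (hbc : b ≠ c) :
    ¬ Collinear ℝ ({((a, a^2) : Pt), (b, b^2), (c, c^2)} : Set Pt) := by
  apply cross_not_collinear
  have h : ((b, b^2) : Pt).1 - ((a, a^2) : Pt).1 = b - a := rfl
  show (b - a) * (c^2 - a^2) - (b^2 - a^2) * (c - a) ≠ 0
  have : (b - a) * (c^2 - a^2) - (b^2 - a^2) * (c - a) = (b - a) * ((c - a) * (c - b)) := by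
    ring
  rw [this]
  exact mul_ne_zero (sub_ne_zero.mpr hab.symm)
    (mul_ne_zero (sub_ne_zero.mpr hac.symm) (sub_ne_zero.mpr hbc.symm))

lemma nc_x (Hr a b : ℝ) (hab : a ≠ b) (hH : a * b ≠ Hr) :
    ¬ Collinear ℝ ({((0, -Hr) : Pt), (a, a^2), (b, b^2)} : Set Pt) := by
  apply cross_not_collinear
  show (a - 0) * (b^2 - -Hr) - (a^2 - -Hr) * (b - 0) ≠ 0
  have : (a - 0) * (b^2 - -Hr) - (a^2 - -Hr) * (b - 0) = (b - a) * (a * b - Hr) := by ring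
  rw [this]
  exact mul_ne_zero (sub_ne_zero.mpr hab.symm) (sub_ne_zero.mpr hH)

/-- the middle point of the parabola is strictly inside a long triangle -/
lemma inside_mid (Hr a b : ℝ) (ha : 1 ≤ a) (hab : a + 2 ≤ b) (hH : (a + 1) * b < Hr) :
    ((a + 1, (a + 1)^2) : Pt) ∈
      interior (convexHull ℝ ({((0, -Hr) : Pt), (a, a^2), (b, b^2)} : Set Pt)) := by
  rw [triple_comm23]
  apply strict_inside ((0, -Hr) : Pt) ((b, b^2) : Pt) ((a, a^2) : Pt) ((a + 1, (a + 1)^2) : Pt)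
  · show 0 < (b - (a+1)) * (a^2 - (a+1)^2) - (b^2 - (a+1)^2) * (a - (a+1))
    have h : (b - (a+1)) * (a^2 - (a+1)^2) - (b^2 - (a+1)^2) * (a - (a+1))
        = (b - (a+1)) * (b - a) := by ring
    rw [h]; nlinarith
  · show 0 < (a - (a+1)) * (-Hr - (a+1)^2) - (a^2 - (a+1)^2) * (0 - (a+1))
    have h : (a - (a+1)) * (-Hr - (a+1)^2) - (a^2 - (a+1)^2) * (0 - (a+1))
        = Hr - a * (a + 1) := by ring
    rw [h]; nlinarith
  · show 0 < (0 - (a+1)) * (b^2 - (a+1)^2) - (-Hr - (a+1)^2) * (b - (a+1))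
    have h : (0 - (a+1)) * (b^2 - (a+1)^2) - (-Hr - (a+1)^2) * (b - (a+1))
        = (b - (a+1)) * (Hr - (a+1) * b) := by ring
    rw [h]; nlinarith

/-- the basic empty triangles of the construction -/
lemma empty_tri (n : ℕ) (hn : 3 ≤ n) (i : ℕ) (h1 : 1 ≤ i) (h2 : i ≤ n - 2) :
    EmptyTri ↑(Ps n) (xpt n) (vpt i) (vpt (i + 1)) := by
  have hiF : vpt i ∈ Fs n := mem_Fs.mpr ⟨i, ⟨h1, by omega⟩, rfl⟩
  have hi1F : vpt (i + 1) ∈ Fs n := mem_Fs.mpr ⟨i + 1, ⟨by omega, by omega⟩, rfl⟩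
  obtain ⟨hi1, hin⟩ := cast_bounds hn h1 (show i ≤ n - 1 by omega)
  have hn3 : (3 : ℝ) ≤ (n : ℝ) := by exact_mod_cast hn
  have hii : (i : ℝ) * (i : ℝ) + (i : ℝ) < (n : ℝ)^4 := keyineq _ _ hn hi1 hin hi1 hin
  refine ⟨?_, ?_, ?_, ?_, ?_, ?_, ?_⟩
  · exact Finset.mem_coe.mpr (Finset.mem_insert_self _ _)
  · exact Finset.mem_coe.mpr (Finset.mem_insert_of_mem hiF)
  · exact Finset.mem_coe.mpr (Finset.mem_insert_of_mem hi1F)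
  · exact xpt_ne_vpt n i h1
  · exact xpt_ne_vpt n (i + 1) (by omega)
  · intro h; have := vpt_inj h; omega
  · intro p hp
    rw [Finset.mem_coe, Ps, Finset.mem_insert] at hp
    rcases hp with rfl | hp
    · -- p = xpt n : use the side line through xpt and vpt i
      apply not_mem_interior_tri _ _ _ _ (-((i:ℝ)^2 + (n:ℝ)^4)) (i : ℝ) ((i:ℝ) * (n:ℝ)^4)
      · rintro ⟨hA, -⟩; nlinarith
      · show -((i:ℝ)^2 + (n:ℝ)^4) * (0:ℝ) + (i:ℝ) * (-(n:ℝ)^4) + (i:ℝ) * (n:ℝ)^4 ≤ 0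
        ring_nf; rfl
      · show -((i:ℝ)^2 + (n:ℝ)^4) * (i:ℝ) + (i:ℝ) * (i:ℝ)^2 + (i:ℝ) * (n:ℝ)^4 ≤ 0
        nlinarith
      · show -((i:ℝ)^2 + (n:ℝ)^4) * ((i+1 : ℕ):ℝ) + (i:ℝ) * ((i+1 : ℕ):ℝ)^2
            + (i:ℝ) * (n:ℝ)^4 ≤ 0
        push_cast
        nlinarith
      · show (0:ℝ) ≤ -((i:ℝ)^2 + (n:ℝ)^4) * (0:ℝ) + (i:ℝ) * (-(n:ℝ)^4) + (i:ℝ) * (n:ℝ)^4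
        ring_nf; rfl
    · -- p = vpt k : use the chord through vpt i and vpt (i+1)
      obtain ⟨k, ⟨hk1, hkn⟩, rfl⟩ := mem_Fs.mp hp
      obtain ⟨hk1', hkn'⟩ := cast_bounds hn hk1 hkn
      apply not_mem_interior_tri _ _ _ _ (-(2*(i:ℝ)+1)) 1 ((i:ℝ)^2 + (i:ℝ))
      · rintro ⟨-, hB⟩; norm_num at hB
      · show -(2*(i:ℝ)+1) * (0:ℝ) + 1 * (-(n:ℝ)^4) + ((i:ℝ)^2 + (i:ℝ)) ≤ 0
        nlinarith
      · show -(2*(i:ℝ)+1) * (i:ℝ) + 1 * (i:ℝ)^2 + ((i:ℝ)^2 + (i:ℝ)) ≤ 0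
        nlinarith
      · show -(2*(i:ℝ)+1) * ((i+1 : ℕ):ℝ) + 1 * ((i+1 : ℕ):ℝ)^2 + ((i:ℝ)^2 + (i:ℝ)) ≤ 0
        push_cast; nlinarith
      · show (0:ℝ) ≤ -(2*(i:ℝ)+1) * (k:ℝ) + 1 * (k:ℝ)^2 + ((i:ℝ)^2 + (i:ℝ))
        have key : -(2*(i:ℝ)+1) * (k:ℝ) + 1 * (k:ℝ)^2 + ((i:ℝ)^2 + (i:ℝ))
            = ((k:ℝ) - (i:ℝ)) * ((k:ℝ) - (i:ℝ) - 1) := by ring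
        rw [key]
        rcases le_or_gt k i with h | h
        · have : (k:ℝ) ≤ (i:ℝ) := by exact_mod_cast h
          nlinarith
        · have : (i:ℝ) + 1 ≤ (k:ℝ) := by exact_mod_cast h
          nlinarith

/-- tightness. For every `n ≥ 3` there are a set `P` of `n` points in
general position and a geometric graph `G` with vertex set `P` such that
`s(G) = n - 2` and `G` has no plane spanning tree. -/
theorem tightness_of_main_theorem (n : ℕ) (hn : 3 ≤ n) :
    ∃ (P : Finset Pt) (G : SimpleGraph Pt),
      P.card = n ∧ GenPos ↑P ∧ EdgesIn G ↑P ∧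
      sG ↑P G = n - 2 ∧ ¬ HasPlaneSpanningTree ↑P G := by
  refine ⟨Ps n, Gg n, ?_, ?_, ?_, ?_, ?_⟩
  · -- card
    rw [Ps, Finset.card_insert_of_notMem (xpt_not_mem_Fs n), Fs,
      Finset.card_image_of_injective _ vpt_inj, Nat.card_Icc]
    omega
  · -- GenPos
    intro u hu v hv w hw huv huw hvw
    have memP : ∀ q, q ∈ (↑(Ps n) : Set Pt) →
        q = xpt n ∨ ∃ k, (1 ≤ k ∧ k ≤ n - 1) ∧ q = vpt k := by
      intro q hq
      rw [Finset.mem_coe, Ps, Finset.mem_insert] at hq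
      rcases hq with rfl | hq
      · exact Or.inl rfl
      · exact Or.inr (mem_Fs.mp hq)
    have cast_ne : ∀ p q : ℕ, vpt p ≠ vpt q → (p : ℝ) ≠ (q : ℝ) := by
      intro p q hne h
      exact hne (congrArg vpt (Nat.cast_injective h))
    have hprod : ∀ a b : ℕ, (1 ≤ a ∧ a ≤ n - 1) → (1 ≤ b ∧ b ≤ n - 1) →
        (a : ℝ) * (b : ℝ) ≠ (n : ℝ) ^ 4 := by
      intro a b ha hb
      obtain ⟨ha1, han⟩ := cast_bounds hn ha.1 ha.2
      obtain ⟨hb1, hbn⟩ := cast_bounds hn hb.1 hb.2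
      have := keyineq (a : ℝ) (b : ℝ) hn ha1 han hb1 hbn
      nlinarith
    rcases memP u hu with rfl | ⟨a, ha, rfl⟩
    · rcases memP v hv with rfl | ⟨b, hb, rfl⟩
      · exact absurd rfl huv
      rcases memP w hw with rfl | ⟨c, hc, rfl⟩
      · exact absurd rfl huw
      simp only [xpt, vpt]
      exact nc_x ((n:ℝ)^4) (b:ℝ) (c:ℝ) (cast_ne b c hvw) (hprod b c hb hc)
    · rcases memP v hv with rfl | ⟨b, hb, rfl⟩
      · rcases memP w hw with rfl | ⟨c, hc, rfl⟩
        · exact absurd rfl hvw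
        rw [triple_comm12]
        simp only [xpt, vpt]
        exact nc_x ((n:ℝ)^4) (a:ℝ) (c:ℝ) (cast_ne a c huw) (hprod a c ha hc)
      rcases memP w hw with rfl | ⟨c, hc, rfl⟩
      · rw [triple_rot]
        simp only [xpt, vpt]
        exact nc_x ((n:ℝ)^4) (a:ℝ) (b:ℝ) (cast_ne a b huv) (hprod a b ha hb)
      · simp only [vpt]
        exact nc_parab (a:ℝ) (b:ℝ) (c:ℝ) (cast_ne a b huv) (cast_ne a c huw)
          (cast_ne b c hvw)
  · -- EdgesIn
    intro a b hab
    rw [Gg, SimpleGraph.fromRel_adj] at hab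
    have haF : a ∈ Fs n ∧ b ∈ Fs n := by tauto
    constructor
    · exact Finset.mem_coe.mpr (Finset.mem_insert_of_mem haF.1)
    · exact Finset.mem_coe.mpr (Finset.mem_insert_of_mem haF.2)
  · -- sG
    have hinj : Set.InjOn (fun i => ({xpt n, vpt i, vpt (i+1)} : Set Pt))
        ↑(Finset.Icc 1 (n-2)) := by
      intro i hi j hj h
      simp only [Finset.coe_Icc, Set.mem_Icc] at hi hj
      simp only at h
      have hmi : vpt i ∈ ({xpt n, vpt j, vpt (j+1)} : Set Pt) := by rw [← h]; simp
      have hmi1 : vpt (i+1) ∈ ({xpt n, vpt j, vpt (j+1)} : Set Pt) := by rw [← h]; simp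
      simp only [Set.mem_insert_iff, Set.mem_singleton_iff] at hmi hmi1
      have e1 : i = j ∨ i = j + 1 := by
        rcases hmi with h' | h' | h'
        · exact absurd h'.symm (xpt_ne_vpt n i hi.1)
        · exact Or.inl (vpt_inj h')
        · exact Or.inr (vpt_inj h')
      have e2 : i + 1 = j ∨ i + 1 = j + 1 := by
        rcases hmi1 with h' | h' | h'
        · exact absurd h'.symm (xpt_ne_vpt n (i+1) (by omega))
        · exact Or.inl (vpt_inj h')
        · exact Or.inr (vpt_inj h')
      omega
    have hset : {t : Set Pt | ∃ u v w, t = {u, v, w} ∧ DiscTri ↑(Ps n) (Gg n) u v w}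
        = (fun i => ({xpt n, vpt i, vpt (i+1)} : Set Pt)) '' ↑(Finset.Icc 1 (n-2)) := by
      ext t
      simp only [Set.mem_setOf_eq, Set.mem_image, Finset.coe_Icc, Set.mem_Icc]
      constructor
      · rintro ⟨u, v, w, rfl, ⟨hEmp, hNC⟩⟩
        obtain ⟨huP, hvP, hwP, huv, huw, hvw, hEmpty⟩ := hEmp
        have memP : ∀ q, q ∈ (↑(Ps n) : Set Pt) →
            q = xpt n ∨ ∃ k, (1 ≤ k ∧ k ≤ n - 1) ∧ q = vpt k := by
          intro q hq
          rw [Finset.mem_coe, Ps, Finset.mem_insert] at hq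
          rcases hq with rfl | hq
          · exact Or.inl rfl
          · exact Or.inr (mem_Fs.mp hq)
        have main : ∀ a b : ℕ, (1 ≤ a ∧ a ≤ n-1) → (1 ≤ b ∧ b ≤ n-1) → a < b →
            ({u, v, w} : Set Pt) = {xpt n, vpt a, vpt b} →
            ∃ i, (1 ≤ i ∧ i ≤ n - 2) ∧
              ({xpt n, vpt i, vpt (i+1)} : Set Pt) = {u, v, w} := by
          intro a b ha hb hab hseteq
          by_cases hb1 : b = a + 1
          · exact ⟨a, ⟨ha.1, by omega⟩, by rw [hseteq, hb1]⟩
          · exfalso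
            have han1 : 1 ≤ a + 1 ∧ a + 1 ≤ n - 1 := ⟨by omega, by omega⟩
            have hmidP : vpt (a+1) ∈ (↑(Ps n) : Set Pt) := by
              rw [Finset.mem_coe, Ps, Finset.mem_insert]
              exact Or.inr (mem_Fs.mpr ⟨a+1, han1, rfl⟩)
            apply hEmpty (vpt (a+1)) hmidP
            rw [hseteq]
            obtain ⟨ha1, hanr⟩ := cast_bounds hn ha.1 ha.2
            obtain ⟨hb1r, hbnr⟩ := cast_bounds hn hb.1 hb.2
            obtain ⟨ha11, ha1n⟩ := cast_bounds hn han1.1 han1.2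
            have hcast1 : ((a + 1 : ℕ) : ℝ) = (a : ℝ) + 1 := by push_cast; ring
            have hab2 : (a : ℝ) + 2 ≤ (b : ℝ) := by
              have : a + 2 ≤ b := by omega
              exact_mod_cast this
            have hH : ((a : ℝ) + 1) * (b : ℝ) < (n : ℝ) ^ 4 := by
              have := keyineq ((a:ℝ)+1) (b:ℝ) hn (by linarith)
                (by rw [← hcast1]; exact ha1n) hb1r hbnr
              nlinarith
            have hmem := inside_mid ((n:ℝ)^4) (a:ℝ) (b:ℝ) ha1 hab2 hH
            simp only [xpt, vpt, hcast1]
            exact hmem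
        rcases memP u huP with rfl | ⟨a, ha, rfl⟩
        · rcases memP v hvP with rfl | ⟨b, hb, rfl⟩
          · exact absurd rfl huv
          rcases memP w hwP with rfl | ⟨c, hc, rfl⟩
          · exact absurd rfl huw
          have hbc : b ≠ c := fun h => hvw (congrArg vpt h)
          rcases Nat.lt_or_ge b c with h' | h'
          · obtain ⟨i, hi, he⟩ := main b c hb hc h' rfl
            exact ⟨i, hi, he⟩
          · have h'' : c < b := by omega
            obtain ⟨i, hi, he⟩ := main c b hc hb h'' (triple_comm23 _ _ _)
            exact ⟨i, hi, he⟩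
        · rcases memP v hvP with rfl | ⟨b, hb, rfl⟩
          · rcases memP w hwP with rfl | ⟨c, hc, rfl⟩
            · exact absurd rfl hvw
            have hac : a ≠ c := fun h => huw (congrArg vpt h)
            rcases Nat.lt_or_ge a c with h' | h'
            · obtain ⟨i, hi, he⟩ := main a c ha hc h' (triple_comm12 _ _ _)
              exact ⟨i, hi, he⟩
            · have h'' : c < a := by omega
              obtain ⟨i, hi, he⟩ := main c a hc ha h''
                ((triple_comm12 _ _ _).trans (triple_comm23 _ _ _))
              exact ⟨i, hi, he⟩
          rcases memP w hwP with rfl | ⟨c, hc, rfl⟩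
          · have hab : a ≠ b := fun h => huv (congrArg vpt h)
            rcases Nat.lt_or_ge a b with h' | h'
            · obtain ⟨i, hi, he⟩ := main a b ha hb h' (triple_rot _ _ _)
              exact ⟨i, hi, he⟩
            · have h'' : b < a := by omega
              obtain ⟨i, hi, he⟩ := main b a hb ha h''
                ((triple_rot _ _ _).trans (triple_comm23 _ _ _))
              exact ⟨i, hi, he⟩
          · -- no apex: the induced graph is connected, contradiction
            exfalso
            apply hNC
            apply conn_sub n _ ⟨vpt a, by simp⟩
            intro q hq
            simp only [Set.mem_insert_iff, Set.mem_singleton_iff] at hq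
            rcases hq with rfl | rfl | rfl
            · exact Finset.mem_coe.mpr (mem_Fs.mpr ⟨a, ha, rfl⟩)
            · exact Finset.mem_coe.mpr (mem_Fs.mpr ⟨b, hb, rfl⟩)
            · exact Finset.mem_coe.mpr (mem_Fs.mpr ⟨c, hc, rfl⟩)
      · rintro ⟨i, ⟨hi1, hi2⟩, rfl⟩
        refine ⟨xpt n, vpt i, vpt (i+1), rfl, empty_tri n hn i hi1 hi2, ?_⟩
        apply no_conn n (Gg n) le_rfl _ (Set.mem_insert _ _) (vpt i) (by simp)
          (xpt_ne_vpt n i hi1).symm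
    show sG ↑(Ps n) (Gg n) = n - 2
    rw [sG, hset, Set.ncard_image_of_injOn hinj, Set.ncard_coe_finset, Nat.card_Icc]
    omega
  · -- no plane spanning tree
    rintro ⟨T, hTG, -, -, hTree⟩
    have hxP : xpt n ∈ (↑(Ps n) : Set Pt) := Finset.mem_coe.mpr (Finset.mem_insert_self _ _)
    have hv1P : vpt 1 ∈ (↑(Ps n) : Set Pt) := by
      rw [Finset.mem_coe, Ps, Finset.mem_insert]
      exact Or.inr (mem_Fs.mpr ⟨1, ⟨le_refl 1, by omega⟩, rfl⟩)
    exact no_conn n T hTG _ hxP (vpt 1) hv1P (Ne.symm (xpt_ne_vpt n 1 (le_refl 1)))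
      hTree.isConnected
end

section
/- Let n ≥ 3, let u_1, u_2, …, u_n be the vertices of a regular n-gon (e.g., u_k = (cos(2πk/n), sin(2πk/n))), let T_n be the geometric path with edges u_1u_2, u_2u_3, …, u_{n−1}u_n, and let T_n^c be its complement geometric graph on the same vertex set. Then s(T_n^c) = n − 2, i.e., T_n^c has exactly n − 2 disconnected empty triangles. -/
open Real

/- ---------- Auxiliary lemmas ---------- -/

/-- A 3-point induced graph with two edges out of `a` is connected. -/
lemma conn3 (G : SimpleGraph Pt) (s : Set Pt) (a b c : Pt)
    (hmem : ∀ x ∈ s, x = a ∨ x = b ∨ x = c)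
    (ha : a ∈ s) (hab : G.Adj a b) (hac : G.Adj a c) :
    (G.induce s).Connected := by
  rw [SimpleGraph.connected_iff]
  refine ⟨?_, ⟨⟨a, ha⟩⟩⟩
  · intro x y
    have key : ∀ z : s, (G.induce s).Reachable z ⟨a, ha⟩ := by
      intro z
      rcases hmem z.1 z.2 with h | h | h
      · rw [show z = (⟨a, ha⟩ : s) from Subtype.ext h]
      · have : (G.induce s).Adj z ⟨a, ha⟩ := by
          simp only [SimpleGraph.comap_adj, Function.Embedding.coe_subtype]
          rw [h]; exact hab.symm
        exact this.reachable
      · have : (G.induce s).Adj z ⟨a, ha⟩ := by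
          simp only [SimpleGraph.comap_adj, Function.Embedding.coe_subtype]
          rw [h]; exact hac.symm
        exact this.reachable
    exact (key x).trans (key y).symm

/-- An induced graph with an isolated vertex `b` and another vertex `a` is
disconnected. -/
lemma disc3 (G : SimpleGraph Pt) (s : Set Pt) (a b : Pt)
    (ha : a ∈ s) (hb : b ∈ s) (hab : a ≠ b)
    (h : ∀ x ∈ s, ¬ G.Adj b x) : ¬ (G.induce s).Connected := by
  intro hconn
  obtain ⟨w⟩ := hconn.preconnected ⟨b, hb⟩ ⟨a, ha⟩
  cases w with
  | nil => exact hab rfl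
  | cons hadj p =>
      rename_i v
      have : G.Adj b v.1 := by
        simpa only [SimpleGraph.comap_adj, Function.Embedding.coe_subtype] using hadj
      exact h v.1 v.2 this

/-- Injectivity of the vertices of the regular `n`-gon. -/
lemma cos_sin_inj (n j k : ℕ) (hn : 0 < n) (hj1 : 1 ≤ j) (hjn : j ≤ n)
    (hk1 : 1 ≤ k) (hkn : k ≤ n)
    (hc : Real.cos (2*π*j/n) = Real.cos (2*π*k/n))
    (hs : Real.sin (2*π*j/n) = Real.sin (2*π*k/n)) : j = k := by
  set x : ℝ := 2*π*j/n with hx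
  set y : ℝ := 2*π*k/n with hy
  have hexp : Complex.exp (x * Complex.I) = Complex.exp (y * Complex.I) := by
    rw [Complex.exp_mul_I, Complex.exp_mul_I]
    have h1 : Complex.cos x = Complex.cos y := by
      rw [← Complex.ofReal_cos, ← Complex.ofReal_cos]; exact_mod_cast hc
    have h2 : Complex.sin x = Complex.sin y := by
      rw [← Complex.ofReal_sin, ← Complex.ofReal_sin]; exact_mod_cast hs
    rw [h1, h2]
  rw [Complex.exp_eq_exp_iff_exists_int] at hexp
  obtain ⟨m, hm⟩ := hexp
  have hm' : (x : ℂ) = (y : ℂ) + m * (2 * (π : ℂ)) := by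
    have hI : ((x : ℂ) - ((y : ℂ) + m * (2 * (π:ℂ)))) * Complex.I = 0 := by
      rw [sub_mul]; rw [hm]; ring
    rcases mul_eq_zero.mp hI with h | h
    · linear_combination h
    · exact absurd h Complex.I_ne_zero
  have hr : x = y + m * (2 * π) := by exact_mod_cast hm'
  have hπ : (0:ℝ) < π := Real.pi_pos
  have hnR : (0:ℝ) < n := by exact_mod_cast hn
  have hjk : (j : ℝ) - k = m * n := by
    rw [hx, hy] at hr
    field_simp at hr
    nlinarith [hr]
  have hm0 : m = 0 := by
    by_contra hm0
    have h1 : (1:ℝ) ≤ |(m:ℝ)| := by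
      have : (1:ℤ) ≤ |m| := Int.one_le_abs hm0
      exact_mod_cast this
    have habs : |(j:ℝ) - k| ≤ (n:ℝ) - 1 := by
      rw [abs_le]
      constructor <;>
        · linarith [(by exact_mod_cast hj1 : (1:ℝ) ≤ (j:ℝ)),
            (by exact_mod_cast hjn : (j:ℝ) ≤ n),
            (by exact_mod_cast hk1 : (1:ℝ) ≤ (k:ℝ)),
            (by exact_mod_cast hkn : (k:ℝ) ≤ n)]
    rw [hjk, abs_mul, abs_of_nonneg (le_of_lt hnR)] at habs
    nlinarith
  rw [hm0] at hjk
  push_cast at hjk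
  have : (j:ℝ) = k := by linarith
  exact_mod_cast this

/-- A point of the unit circle is not in the interior of the convex hull of three
points of the unit circle. -/
lemma not_in_interior (a b c p : Pt)
    (ha : a.1^2 + a.2^2 = 1) (hb : b.1^2 + b.2^2 = 1) (hc : c.1^2 + c.2^2 = 1)
    (hp : p.1^2 + p.2^2 = 1) :
    p ∉ interior (convexHull ℝ ({a, b, c} : Set Pt)) := by
  set S : Set Pt := {q : Pt | q.1^2 + q.2^2 ≤ 1} with hS
  have hconv : Convex ℝ S := by
    intro x hx y hy s t hs ht hst
    simp only [hS, Set.mem_setOf_eq] at hx hy ⊢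
    have h1 : (s • x + t • y).1 = s * x.1 + t * y.1 := rfl
    have h2 : (s • x + t • y).2 = s * x.2 + t * y.2 := rfl
    rw [h1, h2]
    nlinarith [mul_nonneg (mul_nonneg hs ht) (sq_nonneg (x.1 - y.1)),
      mul_nonneg (mul_nonneg hs ht) (sq_nonneg (x.2 - y.2)),
      mul_nonneg hs (sub_nonneg.mpr hx), mul_nonneg ht (sub_nonneg.mpr hy)]
  have hhull : convexHull ℝ ({a, b, c} : Set Pt) ⊆ S := by
    apply convexHull_min _ hconv
    intro q hq
    rcases hq with h | h | h <;> subst h <;> simp only [hS, Set.mem_setOf_eq] <;>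
      [exact ha.le; exact hb.le; exact hc.le]
  intro hpint
  have hpS : p ∈ interior S := interior_mono hhull hpint
  rw [mem_interior_iff_mem_nhds, Metric.mem_nhds_iff] at hpS
  obtain ⟨ε, hε, hball⟩ := hpS
  set δ : ℝ := min (ε/2) 1 with hδ
  have hδpos : 0 < δ := by positivity
  have hδε : δ < ε := by
    have : δ ≤ ε/2 := min_le_left _ _
    linarith
  have hp1 : |p.1| ≤ 1 := by nlinarith [sq_nonneg p.2, abs_nonneg p.1, sq_abs p.1]
  have hp2 : |p.2| ≤ 1 := by nlinarith [sq_nonneg p.1, abs_nonneg p.2, sq_abs p.2]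
  set q : Pt := ((1+δ) * p.1, (1+δ) * p.2) with hq
  have hdist : dist q p < ε := by
    rw [Prod.dist_eq]
    have d1 : dist q.1 p.1 = δ * |p.1| := by
      rw [Real.dist_eq, hq]
      rw [show (1+δ) * p.1 - p.1 = δ * p.1 by ring, abs_mul, abs_of_pos hδpos]
    have d2 : dist q.2 p.2 = δ * |p.2| := by
      rw [Real.dist_eq, hq]
      rw [show (1+δ) * p.2 - p.2 = δ * p.2 by ring, abs_mul, abs_of_pos hδpos]
    rw [d1, d2]
    apply lt_of_le_of_lt (max_le (by nlinarith) (by nlinarith)) hδε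
  have hqS : q ∈ S := hball (Metric.mem_ball.mpr hdist)
  simp only [hS, Set.mem_setOf_eq, hq] at hqS
  have key : ((1+δ)*p.1)^2 + ((1+δ)*p.2)^2 = (1+δ)^2 := by
    have h' : ((1+δ)*p.1)^2 + ((1+δ)*p.2)^2 = (1+δ)^2 * (p.1^2+p.2^2) := by ring
    rw [h', hp, mul_one]
  rw [key] at hqS
  nlinarith

/-- Let `u 1, …, u n` (`n ≥ 3`) be the vertices of a regular `n`-gon,
`Tn` the geometric path `u 1, u 2, …, u n`, and `Tc` its complement geometric graph on
the same vertex set `P`. Then `s(Tc) = n - 2`. -/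
theorem regular_ngon_path_complement_count
    (n : ℕ) (hn : 3 ≤ n)
    (u : ℕ → Pt)
    (hu : ∀ k, u k = (Real.cos (2 * Real.pi * k / n), Real.sin (2 * Real.pi * k / n)))
    (P : Finset Pt) (hP : P = (Finset.Icc 1 n).image u)
    (Tn : SimpleGraph Pt)
    (hTn : ∀ a b, Tn.Adj a b ↔ ∃ k, 1 ≤ k ∧ k < n ∧
      ((a = u k ∧ b = u (k + 1)) ∨ (a = u (k + 1) ∧ b = u k)))
    (Tc : SimpleGraph Pt)
    (hTc : ∀ a b, Tc.Adj a b ↔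
      a ∈ (↑P : Set Pt) ∧ b ∈ (↑P : Set Pt) ∧ a ≠ b ∧ ¬ Tn.Adj a b) :
    sG ↑P Tc = n - 2 := by
  -- injectivity of u on [1, n]
  have uinj : ∀ j k : ℕ, 1 ≤ j → j ≤ n → 1 ≤ k → k ≤ n → u j = u k → j = k := by
    intro j k hj1 hjn hk1 hkn h
    rw [hu j, hu k, Prod.ext_iff] at h
    exact cos_sin_inj n j k (by omega) hj1 hjn hk1 hkn h.1 h.2
  -- membership in P
  have hmemP : ∀ k : ℕ, 1 ≤ k → k ≤ n → u k ∈ (↑P : Set Pt) := by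
    intro k h1 h2
    rw [hP]
    simp only [Finset.coe_image, Set.mem_image, Finset.mem_coe, Finset.mem_Icc]
    exact ⟨k, ⟨h1, h2⟩, rfl⟩
  -- all points of P lie on the unit circle
  have hnorm : ∀ k : ℕ, (u k).1^2 + (u k).2^2 = 1 := by
    intro k
    rw [hu k]
    simpa using Real.cos_sq_add_sin_sq (2 * π * k / n)
  have hnormP : ∀ x ∈ (↑P : Set Pt), x.1^2 + x.2^2 = 1 := by
    intro x hx
    rw [hP] at hx
    simp only [Finset.coe_image, Set.mem_image, Finset.mem_coe, Finset.mem_Icc] at hx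
    obtain ⟨k, _, hk⟩ := hx
    rw [← hk]; exact hnorm k
  -- characterization of path adjacency via indices
  have htn : ∀ i j : ℕ, 1 ≤ i → i ≤ n → 1 ≤ j → j ≤ n →
      (Tn.Adj (u i) (u j) ↔ (j = i + 1 ∨ i = j + 1)) := by
    intro i j hi1 hin hj1 hjn
    rw [hTn]
    constructor
    · rintro ⟨k, hk1, hkn, ⟨h1, h2⟩ | ⟨h1, h2⟩⟩
      · have e1 := uinj i k hi1 hin hk1 (by omega) h1
        have e2 := uinj j (k+1) hj1 hjn (by omega) (by omega) h2
        omega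
      · have e1 := uinj i (k+1) hi1 hin (by omega) (by omega) h1
        have e2 := uinj j k hj1 hjn hk1 (by omega) h2
        omega
    · rintro (h | h)
      · exact ⟨i, hi1, by omega, Or.inl ⟨rfl, by rw [h]⟩⟩
      · exact ⟨j, hj1, by omega, Or.inr ⟨by rw [h], rfl⟩⟩
  -- characterization of complement adjacency via indices
  have htc : ∀ i j : ℕ, 1 ≤ i → i ≤ n → 1 ≤ j → j ≤ n → i ≠ j →
      (Tc.Adj (u i) (u j) ↔ (j ≠ i + 1 ∧ i ≠ j + 1)) := by
    intro i j hi1 hin hj1 hjn hij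
    rw [hTc]
    constructor
    · rintro ⟨-, -, -, hna⟩
      constructor <;> intro h <;>
        exact hna ((htn i j hi1 hin hj1 hjn).mpr (by tauto))
    · rintro ⟨h1, h2⟩
      refine ⟨hmemP i hi1 hin, hmemP j hj1 hjn, ?_, ?_⟩
      · intro he
        exact hij (uinj i j hi1 hin hj1 hjn he)
      · intro ha
        rcases (htn i j hi1 hin hj1 hjn).mp ha with h | h <;> omega
  -- the set of disconnected empty triangles
  have hset : {t : Set Pt | ∃ a b c, t = {a, b, c} ∧ DiscTri ↑P Tc a b c}
      = (fun k => ({u k, u (k+1), u (k+2)} : Set Pt)) '' Set.Icc 1 (n-2) := by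
    ext t
    simp only [Set.mem_setOf_eq, Set.mem_image, Set.mem_Icc]
    constructor
    · rintro ⟨a, b, c, ht, ⟨⟨haP, hbP, hcP, hab, hac, hbc, -⟩, hnc⟩⟩
      have hidx : ∀ x ∈ (↑P : Set Pt), ∃ i, (1 ≤ i ∧ i ≤ n) ∧ u i = x := by
        intro x hx
        rw [hP] at hx
        simp only [Finset.coe_image, Set.mem_image, Finset.mem_coe, Finset.mem_Icc] at hx
        obtain ⟨i, hi, he⟩ := hx
        exact ⟨i, hi, he⟩
      obtain ⟨i, hi, hia⟩ := hidx a haP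
      obtain ⟨j, hj, hjb⟩ := hidx b hbP
      obtain ⟨l, hl, hlc⟩ := hidx c hcP
      have hij : i ≠ j := fun h => hab (by rw [← hia, ← hjb, h])
      have hil : i ≠ l := fun h => hac (by rw [← hia, ← hlc, h])
      have hjl : j ≠ l := fun h => hbc (by rw [← hjb, ← hlc, h])
      -- sort the indices
      have hsort : ∃ p q r : ℕ, p < q ∧ q < r ∧ 1 ≤ p ∧ r ≤ n ∧
          ({a, b, c} : Set Pt) = {u p, u q, u r} := by
        rcases Nat.lt_trichotomy i j with h1 | h1 | h1
        · rcases Nat.lt_trichotomy j l with h2 | h2 | h2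
          · exact ⟨i, j, l, h1, h2, hi.1, hl.2, by
              rw [← hia, ← hjb, ← hlc]⟩
          · exact absurd h2 hjl
          · rcases Nat.lt_trichotomy i l with h3 | h3 | h3
            · exact ⟨i, l, j, h3, h2, hi.1, hj.2, by
                rw [← hia, ← hjb, ← hlc]; ext x
                simp only [Set.mem_insert_iff, Set.mem_singleton_iff]; tauto⟩
            · exact absurd h3 hil
            · exact ⟨l, i, j, h3, h1, hl.1, hj.2, by
                rw [← hia, ← hjb, ← hlc]; ext x
                simp only [Set.mem_insert_iff, Set.mem_singleton_iff]; tauto⟩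
        · exact absurd h1 hij
        · rcases Nat.lt_trichotomy i l with h2 | h2 | h2
          · exact ⟨j, i, l, h1, h2, hj.1, hl.2, by
              rw [← hia, ← hjb, ← hlc]; ext x
              simp only [Set.mem_insert_iff, Set.mem_singleton_iff]; tauto⟩
          · exact absurd h2 hil
          · rcases Nat.lt_trichotomy j l with h3 | h3 | h3
            · exact ⟨j, l, i, h3, h2, hj.1, hi.2, by
                rw [← hia, ← hjb, ← hlc]; ext x
                simp only [Set.mem_insert_iff, Set.mem_singleton_iff]; tauto⟩
            · exact absurd h3 hjl
            · exact ⟨l, j, i, h3, h1, hl.1, hi.2, by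
                rw [← hia, ← hjb, ← hlc]; ext x
                simp only [Set.mem_insert_iff, Set.mem_singleton_iff]; tauto⟩
      obtain ⟨p, q, r, hpq, hqr, hp1, hrn, hteq⟩ := hsort
      rw [hteq] at hnc
      have hApr : Tc.Adj (u p) (u r) :=
        (htc p r hp1 (by omega) (by omega) hrn (by omega)).mpr ⟨by omega, by omega⟩
      have hqeq : q = p + 1 := by
        by_contra hq
        apply hnc
        refine conn3 Tc _ (u p) (u q) (u r) ?_ (by simp) ?_ hApr
        · intro x hx
          simpa only [Set.mem_insert_iff, Set.mem_singleton_iff] using hx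
        · exact (htc p q hp1 (by omega) (by omega) (by omega) (by omega)).mpr
            ⟨hq, by omega⟩
      have hreq : r = q + 1 := by
        by_contra hr
        apply hnc
        refine conn3 Tc _ (u r) (u p) (u q) ?_ (by simp) hApr.symm ?_
        · intro x hx
          simp only [Set.mem_insert_iff, Set.mem_singleton_iff] at hx
          tauto
        · exact ((htc q r (by omega) (by omega) (by omega) hrn (by omega)).mpr
            ⟨hr, by omega⟩).symm
      refine ⟨p, ⟨hp1, by omega⟩, ?_⟩
      have hr2 : r = p + 2 := by omega
      rw [ht, hteq, hqeq, hr2]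
    · rintro ⟨k, ⟨hk1, hk2⟩, ht⟩
      have hkn : k + 2 ≤ n := by omega
      have hne1 : u k ≠ u (k+1) := fun h => by
        have := uinj k (k+1) hk1 (by omega) (by omega) (by omega) h; omega
      have hne2 : u k ≠ u (k+2) := fun h => by
        have := uinj k (k+2) hk1 (by omega) (by omega) (by omega) h; omega
      have hne3 : u (k+1) ≠ u (k+2) := fun h => by
        have := uinj (k+1) (k+2) (by omega) (by omega) (by omega) (by omega) h; omega
      refine ⟨u k, u (k+1), u (k+2), ht.symm,
        ⟨⟨hmemP k hk1 (by omega), hmemP (k+1) (by omega) (by omega),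
          hmemP (k+2) (by omega) (by omega), hne1, hne2, hne3, ?_⟩, ?_⟩⟩
      · intro pp hpp
        exact not_in_interior _ _ _ _ (hnorm k) (hnorm (k+1)) (hnorm (k+2)) (hnormP pp hpp)
      · apply disc3 Tc _ (u k) (u (k+1)) (by simp) (by simp) hne1
        intro x hx
        have hnadj : ∀ y : Pt, Tn.Adj (u (k+1)) y → ¬ Tc.Adj (u (k+1)) y := by
          intro y hy hcy
          exact ((hTc _ _).mp hcy).2.2.2 hy
        rcases hx with h | h | h
        · subst h
          exact hnadj _ ((hTn _ _).mpr ⟨k, hk1, by omega, Or.inr ⟨rfl, rfl⟩⟩)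
        · subst h
          intro hcy
          exact ((hTc _ _).mp hcy).2.2.1 rfl
        · subst h
          exact hnadj _ ((hTn _ _).mpr ⟨k+1, by omega, by omega, Or.inl ⟨rfl, rfl⟩⟩)
  -- now count
  show {t : Set Pt | ∃ a b c, t = {a, b, c} ∧ DiscTri ↑P Tc a b c}.ncard = n - 2
  rw [hset]
  have hinj : Set.InjOn (fun k => ({u k, u (k+1), u (k+2)} : Set Pt)) (Set.Icc 1 (n-2)) := by
    intro k hk k' hk' h
    simp only [Set.mem_Icc] at hk hk'
    have hkb : k + 2 ≤ n := by omega
    have hkb' : k' + 2 ≤ n := by omega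
    have h' : ({u k, u (k+1), u (k+2)} : Set Pt) = {u k', u (k'+1), u (k'+2)} := h
    have h1 : u k ∈ ({u k', u (k'+1), u (k'+2)} : Set Pt) := by
      rw [← h']; simp
    have h2 : u k' ∈ ({u k, u (k+1), u (k+2)} : Set Pt) := by
      rw [h']; simp
    simp only [Set.mem_insert_iff, Set.mem_singleton_iff] at h1 h2
    have e1 : k = k' ∨ k = k' + 1 ∨ k = k' + 2 := by
      rcases h1 with h' | h' | h'
      · exact Or.inl (uinj k k' (by omega) (by omega) (by omega) (by omega) h')
      · exact Or.inr (Or.inl (uinj k (k'+1) (by omega) (by omega) (by omega) (by omega) h'))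
      · exact Or.inr (Or.inr (uinj k (k'+2) (by omega) (by omega) (by omega) (by omega) h'))
    have e2 : k' = k ∨ k' = k + 1 ∨ k' = k + 2 := by
      rcases h2 with h' | h' | h'
      · exact Or.inl (uinj k' k (by omega) (by omega) (by omega) (by omega) h')
      · exact Or.inr (Or.inl (uinj k' (k+1) (by omega) (by omega) (by omega) (by omega) h'))
      · exact Or.inr (Or.inr (uinj k' (k+2) (by omega) (by omega) (by omega) (by omega) h'))
    omega
  rw [Set.ncard_image_of_injOn hinj]
  rw [← Finset.coe_Icc, Set.ncard_coe_finset, Nat.card_Icc]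
  omega
end

section
/- Let P be a finite set of points in general position in the plane, let G be a geometric graph with vertex set P, and let f be a nonzero affine functional on ℝ² such that exactly one point v of P satisfies f(v) = 0. Set Q⁻ = {p ∈ P : f(p) ≤ 0} and Q⁺ = {p ∈ P : f(p) ≥ 0}, and let c be the number of disconnected empty triangles of G having at least one vertex with f > 0 and at least one vertex with f < 0. Then s(G[Q⁻]) + s(G[Q⁺]) + c ≤ s(G). -/
open Real

/-- splitting the count along a line. Let `f` be a nonzero affine
functional whose zero line contains exactly one point `v` of `P`, let
`Q⁻ = {p ∈ P | f p ≤ 0}` and `Q⁺ = {p ∈ P | f p ≥ 0}`, and let `c` be the number of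
disconnected empty triangles of `G` crossed by the line (having a vertex with `f > 0`
and a vertex with `f < 0`). Then `s(G[Q⁻]) + s(G[Q⁺]) + c ≤ s(G)`. -/
theorem sG_split_along_line
    (P : Finset Pt) (hgp : GenPos ↑P)
    (G : SimpleGraph Pt) (hG : EdgesIn G ↑P)
    (f : Pt →ᵃ[ℝ] ℝ) (hf : f.linear ≠ 0) (v : Pt)
    (hv : {p ∈ (↑P : Set Pt) | f p = 0} = {v}) :
    sG {p ∈ (↑P : Set Pt) | f p ≤ 0} (induceOn G {p ∈ (↑P : Set Pt) | f p ≤ 0}) +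
      sG {p ∈ (↑P : Set Pt) | 0 ≤ f p} (induceOn G {p ∈ (↑P : Set Pt) | 0 ≤ f p}) +
      {t : Set Pt | ∃ x y z, t = {x, y, z} ∧ DiscTri ↑P G x y z ∧
        (∃ a ∈ ({x, y, z} : Set Pt), 0 < f a) ∧
        (∃ b ∈ ({x, y, z} : Set Pt), f b < 0)}.ncard
      ≤ sG ↑P G := by

  classical
  set Qm : Set Pt := {p ∈ (↑P : Set Pt) | f p ≤ 0} with hQmdef
  set Qp : Set Pt := {p ∈ (↑P : Set Pt) | 0 ≤ f p} with hQpdef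
  -- transfer lemma: a disconnected empty triangle of an induced half works for P
  have key : ∀ (Q : Set Pt), Q ⊆ ↑P →
      (∀ x y z : Pt, x ∈ Q → y ∈ Q → z ∈ Q → ∀ p ∈ (↑P : Set Pt),
        p ∈ convexHull ℝ ({x, y, z} : Set Pt) → p ∈ Q) →
      ∀ x y z : Pt, DiscTri Q (induceOn G Q) x y z → DiscTri ↑P G x y z := by
    intro Q hQP hconv x y z hd
    obtain ⟨⟨hx, hy, hz, hxy, hxz, hyz, hemp⟩, hconn⟩ := hd
    have hsub : ({x, y, z} : Set Pt) ⊆ Q := by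
      intro a ha
      rcases ha with rfl | rfl | rfl <;> assumption
    constructor
    · refine ⟨hQP hx, hQP hy, hQP hz, hxy, hxz, hyz, ?_⟩
      intro p hp hpint
      exact hemp p (hconv x y z hx hy hz p hp (interior_subset hpint)) hpint
    · intro hc
      apply hconn
      have heq : (induceOn G Q).induce ({x, y, z} : Set Pt)
          = G.induce ({x, y, z} : Set Pt) := by
        ext a b
        simp only [SimpleGraph.comap_adj, Function.Embedding.coe_subtype, induceOn]
        constructor
        · rintro ⟨h, _, _⟩; exact h
        · intro h; exact ⟨h, hsub a.2, hsub b.2⟩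
      rw [heq]; exact hc
  set A : Set (Set Pt) :=
    {t : Set Pt | ∃ x y z, t = {x, y, z} ∧ DiscTri Qm (induceOn G Qm) x y z} with hAdef
  set B : Set (Set Pt) :=
    {t : Set Pt | ∃ x y z, t = {x, y, z} ∧ DiscTri Qp (induceOn G Qp) x y z} with hBdef
  set C : Set (Set Pt) :=
    {t : Set Pt | ∃ x y z, t = {x, y, z} ∧ DiscTri ↑P G x y z ∧
        (∃ a ∈ ({x, y, z} : Set Pt), 0 < f a) ∧
        (∃ b ∈ ({x, y, z} : Set Pt), f b < 0)} with hCdef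
  set S : Set (Set Pt) :=
    {t : Set Pt | ∃ x y z, t = {x, y, z} ∧ DiscTri ↑P G x y z} with hSdef
  -- half-plane convexity facts
  have hQmP : Qm ⊆ ↑P := fun p hp => hp.1
  have hQpP : Qp ⊆ ↑P := fun p hp => hp.1
  have hconvm : ∀ x y z : Pt, x ∈ Qm → y ∈ Qm → z ∈ Qm → ∀ p ∈ (↑P : Set Pt),
      p ∈ convexHull ℝ ({x, y, z} : Set Pt) → p ∈ Qm := by
    intro x y z hx hy hz p hp hpc
    have hhull : convexHull ℝ ({x, y, z} : Set Pt) ⊆ f ⁻¹' Set.Iic 0 := by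
      apply convexHull_min
      · intro a ha
        rcases ha with rfl | rfl | rfl
        · exact hx.2
        · exact hy.2
        · exact hz.2
      · exact (convex_Iic (0 : ℝ)).affine_preimage f
    exact ⟨hp, hhull hpc⟩
  have hconvp : ∀ x y z : Pt, x ∈ Qp → y ∈ Qp → z ∈ Qp → ∀ p ∈ (↑P : Set Pt),
      p ∈ convexHull ℝ ({x, y, z} : Set Pt) → p ∈ Qp := by
    intro x y z hx hy hz p hp hpc
    have hhull : convexHull ℝ ({x, y, z} : Set Pt) ⊆ f ⁻¹' Set.Ici 0 := by
      apply convexHull_min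
      · intro a ha
        rcases ha with rfl | rfl | rfl
        · exact hx.2
        · exact hy.2
        · exact hz.2
      · exact (convex_Ici (0 : ℝ)).affine_preimage f
    exact ⟨hp, hhull hpc⟩
  -- inclusions into S
  have hAS : A ⊆ S := by
    rintro t ⟨x, y, z, rfl, hd⟩
    exact ⟨x, y, z, rfl, key Qm hQmP hconvm x y z hd⟩
  have hBS : B ⊆ S := by
    rintro t ⟨x, y, z, rfl, hd⟩
    exact ⟨x, y, z, rfl, key Qp hQpP hconvp x y z hd⟩
  have hCS : C ⊆ S := by
    rintro t ⟨x, y, z, rfl, hd, _, _⟩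
    exact ⟨x, y, z, rfl, hd⟩
  -- finiteness
  have hSfin : S.Finite := by
    apply Set.Finite.subset (Set.Finite.finite_subsets P.finite_toSet)
    rintro t ⟨x, y, z, rfl, ⟨hx, hy, hz, _⟩, _⟩
    intro a ha
    rcases ha with rfl | rfl | rfl <;> assumption
  have hAfin : A.Finite := hSfin.subset hAS
  have hBfin : B.Finite := hSfin.subset hBS
  have hCfin : C.Finite := hSfin.subset hCS
  -- elements of A-triangles are in Qm, etc.
  have hAmem : ∀ t ∈ A, t ⊆ Qm ∧ ∃ a b : Pt, a ∈ t ∧ b ∈ t ∧ a ≠ b := by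
    rintro t ⟨x, y, z, rfl, ⟨⟨hx, hy, hz, hxy, _⟩, _⟩⟩
    refine ⟨?_, x, y, Set.mem_insert _ _, Set.mem_insert_of_mem _ (Set.mem_insert _ _), hxy⟩
    intro a ha
    rcases ha with rfl | rfl | rfl <;> assumption
  have hBmem : ∀ t ∈ B, t ⊆ Qp := by
    rintro t ⟨x, y, z, rfl, ⟨⟨hx, hy, hz, _⟩, _⟩⟩
    intro a ha
    rcases ha with rfl | rfl | rfl <;> assumption
  -- disjointness A B
  have hdAB : Disjoint A B := by
    rw [Set.disjoint_left]
    intro t htA htB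
    obtain ⟨htm, a, b, hat, hbt, hab⟩ := hAmem t htA
    have htp := hBmem t htB
    have hz : ∀ c ∈ t, c = v := by
      intro c hc
      have h1 := htm hc
      have h2 := htp hc
      have : c ∈ {p ∈ (↑P : Set Pt) | f p = 0} := ⟨h1.1, le_antisymm h1.2 h2.2⟩
      rw [hv] at this
      exact this
    exact hab ((hz a hat).trans (hz b hbt).symm)
  -- disjointness (A ∪ B) C
  have hdABC : Disjoint (A ∪ B) C := by
    rw [Set.disjoint_left]
    rintro t htAB ⟨x, y, z, rfl, _, ⟨a, ha, hfa⟩, ⟨b, hb, hfb⟩⟩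
    rcases htAB with htA | htB
    · have := (hAmem _ htA).1 ha
      exact absurd this.2 (not_le.mpr hfa)
    · have := hBmem _ htB hb
      exact absurd this.2 (not_le.mpr hfb)
  -- conclude
  have hU : ((A ∪ B) ∪ C).ncard = A.ncard + B.ncard + C.ncard := by
    rw [Set.ncard_union_eq hdABC (hAfin.union hBfin) hCfin,
        Set.ncard_union_eq hdAB hAfin hBfin]
  calc A.ncard + B.ncard + C.ncard = ((A ∪ B) ∪ C).ncard := hU.symm
    _ ≤ S.ncard := Set.ncard_le_ncard
        (Set.union_subset (Set.union_subset hAS hBS) hCS) hSfin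
end

section
/- Let P be a set of n points in general position in the plane, let G be a geometric graph with vertex set P satisfying s(G) ≤ n − 3, and let f be a nonzero affine functional on ℝ² such that exactly one point v of P satisfies f(v) = 0. Set Q⁻ = {p ∈ P : f(p) ≤ 0} and Q⁺ = {p ∈ P : f(p) ≥ 0} (so |Q⁻| + |Q⁺| = n + 1). If s(G[Q⁻]) ≥ |Q⁻| − 2 and s(G[Q⁺]) ≥ |Q⁺| − 2, then s(G[Q⁻]) = |Q⁻| − 2, s(G[Q⁺]) = |Q⁺| − 2, and no disconnected empty triangle of G has at least one vertex with f > 0 and at least one vertex with f < 0 (i.e., the line {f = 0} does not cross any disconnected empty triangle of G). -/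
open Real

lemma induce_induceOn {G : SimpleGraph Pt} {Q T : Set Pt} (hT : T ⊆ Q) :
    (induceOn G Q).induce T = G.induce T := by
  ext a b
  exact ⟨fun h => h.1, fun h => ⟨h, hT a.2, hT b.2⟩⟩

lemma discTri_restrict {S C : Set Pt} (hC : Convex ℝ C) {G : SimpleGraph Pt} {u v w : Pt} :
    DiscTri (S ∩ C) (induceOn G (S ∩ C)) u v w ↔
      DiscTri S G u v w ∧ u ∈ C ∧ v ∈ C ∧ w ∈ C := by
  constructor
  · rintro ⟨⟨hu, hvv, hw, h1, h2, h3, hemp⟩, hdisc⟩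
    have hTC : ({u, v, w} : Set Pt) ⊆ C := by
      rintro p (rfl | rfl | rfl); exacts [hu.2, hvv.2, hw.2]
    have hhull : interior (convexHull ℝ ({u, v, w} : Set Pt)) ⊆ C :=
      interior_subset.trans (convexHull_min hTC hC)
    refine ⟨⟨⟨hu.1, hvv.1, hw.1, h1, h2, h3, ?_⟩, ?_⟩, hu.2, hvv.2, hw.2⟩
    · intro p hp hpint
      exact hemp p ⟨hp, hhull hpint⟩ hpint
    · rwa [induce_induceOn (by rintro p (rfl | rfl | rfl); exacts [hu, hvv, hw])] at hdisc
  · rintro ⟨⟨⟨hu, hvv, hw, h1, h2, h3, hemp⟩, hdisc⟩, hcu, hcv, hcw⟩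
    refine ⟨⟨⟨hu, hcu⟩, ⟨hvv, hcv⟩, ⟨hw, hcw⟩, h1, h2, h3, fun p hp => hemp p hp.1⟩, ?_⟩
    rwa [induce_induceOn (T := ({u, v, w} : Set Pt))
      (by rintro p (rfl | rfl | rfl); exacts [⟨hu, hcu⟩, ⟨hvv, hcv⟩, ⟨hw, hcw⟩])]

/-- structure in Case 2. Let `P` be a set of `n` points in general
position, `G` a geometric graph on `P` with `s(G) ≤ n - 3`, and `f` a nonzero affine
functional whose zero line contains exactly one point `v` of `P`. Writing
`Q⁻ = {p ∈ P | f p ≤ 0}` and `Q⁺ = {p ∈ P | f p ≥ 0}`, if `s(G[Q⁻]) ≥ |Q⁻| - 2` and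
`s(G[Q⁺]) ≥ |Q⁺| - 2`, then both hold with equality and the line `{f = 0}` crosses no
disconnected empty triangle of `G`. -/
theorem case_two_structure
    (n : ℕ) (P : Finset Pt) (hcard : P.card = n) (hgp : GenPos ↑P)
    (G : SimpleGraph Pt) (hG : EdgesIn G ↑P)
    (hs : sG ↑P G ≤ n - 3)
    (f : Pt →ᵃ[ℝ] ℝ) (hf : f.linear ≠ 0) (v : Pt)
    (hv : {p ∈ (↑P : Set Pt) | f p = 0} = {v})
    (hm : (P.filter fun p => f p ≤ 0).card - 2 ≤
      sG {p ∈ (↑P : Set Pt) | f p ≤ 0} (induceOn G {p ∈ (↑P : Set Pt) | f p ≤ 0}))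
    (hp : (P.filter fun p => 0 ≤ f p).card - 2 ≤
      sG {p ∈ (↑P : Set Pt) | 0 ≤ f p} (induceOn G {p ∈ (↑P : Set Pt) | 0 ≤ f p})) :
    sG {p ∈ (↑P : Set Pt) | f p ≤ 0} (induceOn G {p ∈ (↑P : Set Pt) | f p ≤ 0}) =
        (P.filter fun p => f p ≤ 0).card - 2 ∧
      sG {p ∈ (↑P : Set Pt) | 0 ≤ f p} (induceOn G {p ∈ (↑P : Set Pt) | 0 ≤ f p}) =
        (P.filter fun p => 0 ≤ f p).card - 2 ∧
      ∀ x y z, DiscTri ↑P G x y z →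
        ¬ ((∃ a ∈ ({x, y, z} : Set Pt), 0 < f a) ∧
           (∃ b ∈ ({x, y, z} : Set Pt), f b < 0)) := by
  classical
  -- the single zero point
  have hvP : v ∈ (↑P : Set Pt) ∧ f v = 0 := by
    have : v ∈ {p ∈ (↑P : Set Pt) | f p = 0} := by rw [hv]; exact rfl
    exact this
  -- cardinality bookkeeping
  have hfilter : P.filter (fun p => f p = 0) = {v} := by
    apply Finset.coe_injective
    rw [Finset.coe_filter, Finset.coe_singleton]
    exact hv
  have hAB : (P.filter fun p => f p ≤ 0).card + (P.filter fun p => 0 ≤ f p).card = n + 1 := by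
    have hu : (P.filter fun p => f p ≤ 0) ∪ (P.filter fun p => 0 ≤ f p) = P := by
      ext x
      simp only [Finset.mem_union, Finset.mem_filter]
      constructor
      · rintro (⟨h, _⟩ | ⟨h, _⟩) <;> exact h
      · intro h
        rcases le_total (f x) 0 with h' | h'
        · exact Or.inl ⟨h, h'⟩
        · exact Or.inr ⟨h, h'⟩
    have hi : (P.filter fun p => f p ≤ 0) ∩ (P.filter fun p => 0 ≤ f p) = {v} := by
      rw [← hfilter]
      ext x
      simp only [Finset.mem_inter, Finset.mem_filter]
      constructor
      · rintro ⟨⟨h, h1⟩, ⟨_, h2⟩⟩; exact ⟨h, le_antisymm h1 h2⟩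
      · rintro ⟨h, h0⟩; exact ⟨⟨h, le_of_eq h0⟩, ⟨h, le_of_eq h0.symm⟩⟩
    have := Finset.card_union_add_card_inter (P.filter fun p => f p ≤ 0)
      (P.filter fun p => 0 ≤ f p)
    rw [hu, hi, hcard, Finset.card_singleton] at this
    omega
  -- the sets of triangles
  set S : Set (Set Pt) := {t : Set Pt | ∃ x y z, t = {x, y, z} ∧ DiscTri ↑P G x y z} with hSdef
  have hSsub : ∀ t ∈ S, t ⊆ (↑P : Set Pt) := by
    rintro t ⟨x, y, z, rfl, hd⟩
    rintro p (rfl | rfl | rfl)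
    exacts [hd.1.1, hd.1.2.1, hd.1.2.2.1]
  have hSfin : S.Finite := P.finite_toSet.finite_subsets.subset (fun t ht => hSsub t ht)
  set Sle : Set (Set Pt) := {t ∈ S | ∀ p ∈ t, f p ≤ 0} with hSledef
  set Sge : Set (Set Pt) := {t ∈ S | ∀ p ∈ t, 0 ≤ f p} with hSgedef
  set X : Set (Set Pt) := {t ∈ S | (∃ a ∈ t, 0 < f a) ∧ (∃ b ∈ t, f b < 0)} with hXdef
  have hleS : Sle ⊆ S := fun t ht => ht.1
  have hgeS : Sge ⊆ S := fun t ht => ht.1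
  have hXS : X ⊆ S := fun t ht => ht.1
  have hlefin : Sle.Finite := hSfin.subset hleS
  have hgefin : Sge.Finite := hSfin.subset hgeS
  have hXfin : X.Finite := hSfin.subset hXS
  -- identify the two restricted counts
  have hQle : {p ∈ (↑P : Set Pt) | f p ≤ 0} = (↑P : Set Pt) ∩ (f ⁻¹' Set.Iic 0) := rfl
  have hQge : {p ∈ (↑P : Set Pt) | 0 ≤ f p} = (↑P : Set Pt) ∩ (f ⁻¹' Set.Ici 0) := rfl
  have key_le : sG {p ∈ (↑P : Set Pt) | f p ≤ 0} (induceOn G {p ∈ (↑P : Set Pt) | f p ≤ 0})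
      = Sle.ncard := by
    rw [hQle]
    unfold sG
    congr 1
    ext t
    constructor
    · rintro ⟨x, y, z, rfl, hd⟩
      obtain ⟨hd', hx, hy, hz⟩ :=
        (discTri_restrict ((convex_Iic (0:ℝ)).affine_preimage f)).mp hd
      refine ⟨⟨x, y, z, rfl, hd'⟩, ?_⟩
      rintro p (rfl | rfl | rfl)
      exacts [hx, hy, hz]
    · rintro ⟨⟨x, y, z, rfl, hd⟩, hall⟩
      exact ⟨x, y, z, rfl, (discTri_restrict ((convex_Iic (0:ℝ)).affine_preimage f)).mpr
        ⟨hd, hall x (by simp), hall y (by simp), hall z (by simp)⟩⟩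
  have key_ge : sG {p ∈ (↑P : Set Pt) | 0 ≤ f p} (induceOn G {p ∈ (↑P : Set Pt) | 0 ≤ f p})
      = Sge.ncard := by
    rw [hQge]
    unfold sG
    congr 1
    ext t
    constructor
    · rintro ⟨x, y, z, rfl, hd⟩
      obtain ⟨hd', hx, hy, hz⟩ :=
        (discTri_restrict ((convex_Ici (0:ℝ)).affine_preimage f)).mp hd
      refine ⟨⟨x, y, z, rfl, hd'⟩, ?_⟩
      rintro p (rfl | rfl | rfl)
      exacts [hx, hy, hz]
    · rintro ⟨⟨x, y, z, rfl, hd⟩, hall⟩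
      exact ⟨x, y, z, rfl, (discTri_restrict ((convex_Ici (0:ℝ)).affine_preimage f)).mpr
        ⟨hd, hall x (by simp), hall y (by simp), hall z (by simp)⟩⟩
  -- disjointness
  have hd1 : Disjoint Sle Sge := by
    rw [Set.disjoint_left]
    rintro t ⟨⟨x, y, z, rfl, hd⟩, hle⟩ ⟨_, hge⟩
    have hx : x = v := by
      have : x ∈ ({v} : Set Pt) := by
        rw [← hv]
        exact ⟨hd.1.1, le_antisymm (hle x (by simp)) (hge x (by simp))⟩
      exact this
    have hz : z = v := by
      have : z ∈ ({v} : Set Pt) := by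
        rw [← hv]
        exact ⟨hd.1.2.2.1, le_antisymm (hle z (by simp)) (hge z (by simp))⟩
      exact this
    exact hd.1.2.2.2.2.1 (hx.trans hz.symm)
  have hd2 : Disjoint (Sle ∪ Sge) X := by
    rw [Set.disjoint_left]
    rintro t (⟨_, hle⟩ | ⟨_, hge⟩) ⟨_, ⟨a, ha, hfa⟩, ⟨b, hb, hfb⟩⟩
    · exact absurd (hle a ha) (not_le.mpr hfa)
    · exact absurd (hge b hb) (not_le.mpr hfb)
  -- the counting inequality
  have hsum : Sle.ncard + Sge.ncard + X.ncard ≤ sG ↑P G := by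
    have hU : (Sle ∪ Sge ∪ X).ncard = Sle.ncard + Sge.ncard + X.ncard := by
      rw [Set.ncard_union_eq hd2 (hlefin.union hgefin) hXfin,
        Set.ncard_union_eq hd1 hlefin hgefin]
    have hsub : Sle ∪ Sge ∪ X ⊆ S := Set.union_subset (Set.union_subset hleS hgeS) hXS
    have : (Sle ∪ Sge ∪ X).ncard ≤ S.ncard := Set.ncard_le_ncard hsub hSfin
    rw [hU] at this
    exact this
  -- nonempty restricted families force at least 3 points on the side
  have hA3 : Sle.ncard = 0 ∨ 3 ≤ (P.filter fun p => f p ≤ 0).card := by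
    rcases Set.eq_empty_or_nonempty Sle with h | ⟨t, ht⟩
    · left; simp [h]
    · right
      obtain ⟨⟨x, y, z, rfl, hd⟩, hle⟩ := ht
      have hsub : ({x, y, z} : Finset Pt) ⊆ P.filter fun p => f p ≤ 0 := by
        intro p hp
        simp only [Finset.mem_insert, Finset.mem_singleton] at hp
        rcases hp with rfl | rfl | rfl
        · exact Finset.mem_filter.mpr ⟨hd.1.1, hle p (by simp)⟩
        · exact Finset.mem_filter.mpr ⟨hd.1.2.1, hle p (by simp)⟩
        · exact Finset.mem_filter.mpr ⟨hd.1.2.2.1, hle p (by simp)⟩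
      calc 3 = ({x, y, z} : Finset Pt).card :=
            (Finset.card_eq_three.mpr
              ⟨x, y, z, hd.1.2.2.2.1, hd.1.2.2.2.2.1, hd.1.2.2.2.2.2.1, rfl⟩).symm
        _ ≤ _ := Finset.card_le_card hsub
  have hB3 : Sge.ncard = 0 ∨ 3 ≤ (P.filter fun p => 0 ≤ f p).card := by
    rcases Set.eq_empty_or_nonempty Sge with h | ⟨t, ht⟩
    · left; simp [h]
    · right
      obtain ⟨⟨x, y, z, rfl, hd⟩, hge⟩ := ht
      have hsub : ({x, y, z} : Finset Pt) ⊆ P.filter fun p => 0 ≤ f p := by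
        intro p hp
        simp only [Finset.mem_insert, Finset.mem_singleton] at hp
        rcases hp with rfl | rfl | rfl
        · exact Finset.mem_filter.mpr ⟨hd.1.1, hge p (by simp)⟩
        · exact Finset.mem_filter.mpr ⟨hd.1.2.1, hge p (by simp)⟩
        · exact Finset.mem_filter.mpr ⟨hd.1.2.2.1, hge p (by simp)⟩
      calc 3 = ({x, y, z} : Finset Pt).card :=
            (Finset.card_eq_three.mpr
              ⟨x, y, z, hd.1.2.2.2.1, hd.1.2.2.2.2.1, hd.1.2.2.2.2.2.1, rfl⟩).symm
        _ ≤ _ := Finset.card_le_card hsub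
  rw [key_le] at hm
  rw [key_ge] at hp
  rw [key_le, key_ge]
  refine ⟨by omega, by omega, ?_⟩
  have hX0 : X = ∅ := (Set.ncard_eq_zero hXfin).mp (by omega)
  intro x y z hd hmix
  have : ({x, y, z} : Set Pt) ∈ X := ⟨⟨x, y, z, rfl, hd⟩, hmix.1, hmix.2⟩
  rw [hX0] at this
  exact this
end
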